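/- arXiv:2403.09133 — 4 statements merged into one kernel-verified Lean document; each statement's English description precedes it below -/
import Mathlib

section
/- Feasibility bound for the averaged point (first half of Theorem 2.1): Let (Ū, V̄, λ̄) be an ε-KKT point of the penalized problem with ‖Ū‖_F ≤ σ, ‖V̄‖_F ≤ σ and ‖λ̄‖_2 ≤ σ, and set Û = (Ū + V̄)/2. Then ‖𝒜(ÛÛᵀ) − b‖_2 ≤ ε + ‖𝒜‖_2 (ε + L_f σ + √(s_A) σ²)² / (4γ²), where ‖𝒜‖_2 is the operator norm of 𝒜 from (ℝ^{n×n}, ‖·‖_F) to (ℝ^m, ‖·‖_2). -/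
open Matrix
open scoped BigOperators

noncomputable section

/-- Frobenius inner product of two real matrices. -/
def frobInner {α β : Type*} [Fintype α] [Fintype β] (X Y : Matrix α β ℝ) : ℝ :=
  ∑ i, ∑ j, X i j * Y i j

/-- Frobenius norm of a real matrix. -/
def frobNorm {α β : Type*} [Fintype α] [Fintype β] (X : Matrix α β ℝ) : ℝ :=
  Real.sqrt (∑ i, ∑ j, (X i j) ^ 2)

/-- Euclidean norm of a real vector. -/
def vecNorm {α : Type*} [Fintype α] (v : α → ℝ) : ℝ :=
  Real.sqrt (∑ i, (v i) ^ 2)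

/-- The linear map `𝒜(X) = (⟨A 1, X⟩, …, ⟨A m, X⟩)`. -/
def Aop {n m : ℕ} (A : Fin m → Matrix (Fin n) (Fin n) ℝ)
    (X : Matrix (Fin n) (Fin n) ℝ) : Fin m → ℝ :=
  fun i => frobInner (A i) X

/-- `s_A = Σ_i ‖A_i‖_F²`. -/
def sA {n m : ℕ} (A : Fin m → Matrix (Fin n) (Fin n) ℝ) : ℝ :=
  ∑ i, (frobNorm (A i)) ^ 2

/-- `(U, V, λ)` is an ε-KKT point of the penalized problem
`min f(UVᵀ) + (γ/2)‖U-V‖² s.t. 𝒜(UVᵀ) = b`, where `grad` denotes the gradient of `f`. -/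
def IsPenEpsKKT {n m r : ℕ} (grad : Matrix (Fin n) (Fin n) ℝ → Matrix (Fin n) (Fin n) ℝ)
    (A : Fin m → Matrix (Fin n) (Fin n) ℝ) (b : Fin m → ℝ) (γ ε : ℝ)
    (U V : Matrix (Fin n) (Fin r) ℝ) (lam : Fin m → ℝ) : Prop :=
  frobNorm (grad (U * Vᵀ) * V + γ • (U - V) + ∑ i, lam i • (A i * V)) ≤ ε ∧
  frobNorm (grad (V * Uᵀ) * U + γ • (V - U) + ∑ i, lam i • (A i * U)) ≤ ε ∧
  vecNorm (fun i => Aop A (U * Vᵀ) i - b i) ≤ ε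

/-- `(U, λ)` is an ε-KKT point of the Burer–Monteiro problem
`min f(UUᵀ) s.t. 𝒜(UUᵀ) = b`, where `grad` denotes the gradient of `f`. -/
def IsBMEpsKKT {n m r : ℕ} (grad : Matrix (Fin n) (Fin n) ℝ → Matrix (Fin n) (Fin n) ℝ)
    (A : Fin m → Matrix (Fin n) (Fin n) ℝ) (b : Fin m → ℝ) (ε : ℝ)
    (U : Matrix (Fin n) (Fin r) ℝ) (lam : Fin m → ℝ) : Prop :=
  frobNorm ((2 : ℝ) • (grad (U * Uᵀ) * U) + ∑ i, lam i • (A i * U)) ≤ ε ∧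
  vecNorm (fun i => Aop A (U * Uᵀ) i - b i) ≤ ε

/-- The augmented Lagrangian `L_ρ(U,V,λ)` of the penalized problem. -/
def augL {n m r : ℕ} (f : Matrix (Fin n) (Fin n) ℝ → ℝ)
    (A : Fin m → Matrix (Fin n) (Fin n) ℝ) (b : Fin m → ℝ) (ρ γ : ℝ)
    (U V : Matrix (Fin n) (Fin r) ℝ) (lam : Fin m → ℝ) : ℝ :=
  f (U * Vᵀ) + γ / 2 * (frobNorm (U - V)) ^ 2
    + ∑ i, lam i * (Aop A (U * Vᵀ) i - b i)
    + ρ / 2 * (vecNorm (fun i => Aop A (U * Vᵀ) i - b i)) ^ 2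

/-- The level set `S_β` of the penalty function. -/
def Sset {n m r : ℕ} (f : Matrix (Fin n) (Fin n) ℝ → ℝ)
    (A : Fin m → Matrix (Fin n) (Fin n) ℝ) (b : Fin m → ℝ) (ρ₀ β : ℝ) :
    Set (Matrix (Fin n) (Fin r) ℝ × Matrix (Fin n) (Fin r) ℝ) :=
  {p | f (p.1 * p.2ᵀ) + ρ₀ / 2 * (frobNorm (p.1 - p.2)) ^ 2
      + ρ₀ / 2 * (vecNorm (fun i => Aop A (p.1 * p.2ᵀ) i - b i)) ^ 2 ≤ β}

/-- `𝒞(U)`: the `nr × m` matrix whose `i`-th column is the vectorization of `A_i U`. -/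
def Cmat {n m r : ℕ} (A : Fin m → Matrix (Fin n) (Fin n) ℝ)
    (U : Matrix (Fin n) (Fin r) ℝ) : Matrix (Fin n × Fin r) (Fin m) ℝ :=
  Matrix.of fun p i => (A i * U) p.1 p.2

/-- Smallest singular value of a real matrix, as the infimum of `‖Mx‖` over unit vectors. -/
def sigmaMin {α β : Type*} [Fintype α] [Fintype β] (M : Matrix α β ℝ) : ℝ :=
  sInf {s | ∃ x : β → ℝ, vecNorm x = 1 ∧ s = vecNorm (M.mulVec x)}

/-- Norm of the full gradient of the augmented Lagrangian at `(U, V, λ)`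
(for symmetric `f`, with `grad` the gradient of `f`). -/
def gradAugLNorm {n m r : ℕ} (grad : Matrix (Fin n) (Fin n) ℝ → Matrix (Fin n) (Fin n) ℝ)
    (A : Fin m → Matrix (Fin n) (Fin n) ℝ) (b : Fin m → ℝ) (ρ γ : ℝ)
    (U V : Matrix (Fin n) (Fin r) ℝ) (lam : Fin m → ℝ) : ℝ :=
  Real.sqrt
    ((frobNorm (grad (U * Vᵀ) * V + γ • (U - V)
        + ∑ i, (lam i + ρ * (Aop A (U * Vᵀ) i - b i)) • (A i * V))) ^ 2
      + (frobNorm (grad (V * Uᵀ) * U + γ • (V - U)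
        + ∑ i, (lam i + ρ * (Aop A (U * Vᵀ) i - b i)) • (A i * U))) ^ 2
      + (vecNorm (fun i => Aop A (U * Vᵀ) i - b i)) ^ 2)

/-- Distance between two primal-dual triples, induced by the Frobenius/Euclidean norms. -/
def tripDist {n m r : ℕ}
    (p q : Matrix (Fin n) (Fin r) ℝ × Matrix (Fin n) (Fin r) ℝ × (Fin m → ℝ)) : ℝ :=
  Real.sqrt ((frobNorm (p.1 - q.1)) ^ 2 + (frobNorm (p.2.1 - q.2.1)) ^ 2
    + (vecNorm (fun i => p.2.2 i - q.2.2 i)) ^ 2)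

/-- The set `𝒲` of KKT points of the penalized problem. -/
def KKTset {n m : ℕ} (r : ℕ) (grad : Matrix (Fin n) (Fin n) ℝ → Matrix (Fin n) (Fin n) ℝ)
    (A : Fin m → Matrix (Fin n) (Fin n) ℝ) (b : Fin m → ℝ) (γ : ℝ) :
    Set (Matrix (Fin n) (Fin r) ℝ × Matrix (Fin n) (Fin r) ℝ × (Fin m → ℝ)) :=
  {p | IsPenEpsKKT grad A b γ 0 p.1 p.2.1 p.2.2}


attribute [local instance] Matrix.frobeniusSeminormedAddCommGroup Matrix.frobeniusNormedSpace

lemma vecNorm_eq' {α : Type*} [Fintype α] (v : α → ℝ) :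
    vecNorm v = ‖(WithLp.equiv 2 (α → ℝ)).symm v‖ := by
  rw [EuclideanSpace.norm_eq]
  simp [vecNorm, Real.norm_eq_abs, sq_abs]

lemma frobNorm_eq' {α β : Type*} [Fintype α] [Fintype β] (X : Matrix α β ℝ) :
    frobNorm X = ‖X‖ := by
  rw [Matrix.frobenius_norm_def, ← Real.sqrt_eq_rpow]
  simp [frobNorm, Real.rpow_two, Real.norm_eq_abs, sq_abs]

lemma vecNorm_nonneg' {α : Type*} [Fintype α] (v : α → ℝ) : 0 ≤ vecNorm v :=
  Real.sqrt_nonneg _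

lemma frobNorm_nonneg' {α β : Type*} [Fintype α] [Fintype β] (X : Matrix α β ℝ) :
    0 ≤ frobNorm X := Real.sqrt_nonneg _

lemma vecNorm_add_le' {α : Type*} [Fintype α] (v w : α → ℝ) :
    vecNorm (fun i => v i + w i) ≤ vecNorm v + vecNorm w := by
  have h : (WithLp.equiv 2 (α → ℝ)).symm (fun i => v i + w i)
      = (WithLp.equiv 2 (α → ℝ)).symm v + (WithLp.equiv 2 (α → ℝ)).symm w := rfl
  rw [vecNorm_eq', vecNorm_eq', vecNorm_eq', h]
  exact norm_add_le _ _

lemma vecNorm_smul' {α : Type*} [Fintype α] (c : ℝ) (v : α → ℝ) :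
    vecNorm (fun i => c * v i) = |c| * vecNorm v := by
  have h : (WithLp.equiv 2 (α → ℝ)).symm (fun i => c * v i)
      = c • (WithLp.equiv 2 (α → ℝ)).symm v := rfl
  rw [vecNorm_eq', vecNorm_eq', h, norm_smul, Real.norm_eq_abs]

lemma frobNorm_mul_le' {α β γ' : Type*} [Fintype α] [Fintype β] [Fintype γ']
    (X : Matrix α β ℝ) (Y : Matrix β γ' ℝ) :
    frobNorm (X * Y) ≤ frobNorm X * frobNorm Y := by
  rw [frobNorm_eq', frobNorm_eq', frobNorm_eq']; exact Matrix.frobenius_norm_mul X Y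

lemma frobNorm_transpose' {α β : Type*} [Fintype α] [Fintype β] (X : Matrix α β ℝ) :
    frobNorm Xᵀ = frobNorm X := by
  rw [frobNorm_eq', frobNorm_eq']; exact Matrix.frobenius_norm_transpose X

lemma frobNorm_smul' {α β : Type*} [Fintype α] [Fintype β] (c : ℝ) (X : Matrix α β ℝ) :
    frobNorm (c • X) = |c| * frobNorm X := by
  rw [frobNorm_eq', frobNorm_eq', norm_smul, Real.norm_eq_abs]

lemma frobNorm_sum_le' {ι α β : Type*} [Fintype ι] [Fintype α] [Fintype β]
    (M : ι → Matrix α β ℝ) :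
    frobNorm (∑ i, M i) ≤ ∑ i, frobNorm (M i) := by
  simp only [frobNorm_eq']
  exact norm_sum_le _ _

lemma Aop_add' {n m : ℕ} (A : Fin m → Matrix (Fin n) (Fin n) ℝ)
    (X Y : Matrix (Fin n) (Fin n) ℝ) (i : Fin m) :
    Aop A (X + Y) i = Aop A X i + Aop A Y i := by
  simp [Aop, frobInner, Matrix.add_apply, mul_add, Finset.sum_add_distrib]

lemma Aop_smul' {n m : ℕ} (A : Fin m → Matrix (Fin n) (Fin n) ℝ) (c : ℝ)
    (X : Matrix (Fin n) (Fin n) ℝ) (i : Fin m) :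
    Aop A (c • X) i = c * Aop A X i := by
  simp [Aop, frobInner, Matrix.smul_apply, Finset.mul_sum, smul_eq_mul]
  ring_nf
  simp [mul_comm, mul_left_comm]

lemma Aop_transpose' {n m : ℕ} (A : Fin m → Matrix (Fin n) (Fin n) ℝ)
    (hA : ∀ i, (A i)ᵀ = A i) (X : Matrix (Fin n) (Fin n) ℝ) (i : Fin m) :
    Aop A Xᵀ i = Aop A X i := by
  have hsym : ∀ a b, A i b a = A i a b := by
    intro a b
    conv_lhs => rw [← hA i]
    simp [Matrix.transpose_apply]
  calc Aop A Xᵀ i = ∑ a, ∑ b, A i a b * X b a := rfl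
    _ = ∑ b, ∑ a, A i a b * X b a := Finset.sum_comm
    _ = ∑ a, ∑ b, A i b a * X a b := rfl
    _ = ∑ a, ∑ b, A i a b * X a b := by
        refine Finset.sum_congr rfl fun a _ => Finset.sum_congr rfl fun b _ => ?_
        rw [hsym a b]
set_option maxHeartbeats 1000000 in
/-- first half of Theorem 2.1: feasibility bound for the averaged point.
Here `nA` is any constant bounding the operator norm of 𝒜 from (ℝⁿˣⁿ, ‖·‖_F) to (ℝᵐ, ‖·‖₂);
quantifying over all such bounds is equivalent to the statement for the operator norm itself. -/
theorem feasibility_bound_averaged_point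
    (n m r : ℕ) (hn : 0 < n) (hm : 0 < m) (hr : 0 < r)
    (f : Matrix (Fin n) (Fin n) ℝ → ℝ)
    (hconv : ConvexOn ℝ Set.univ f)
    (hsym : ∀ X : Matrix (Fin n) (Fin n) ℝ, f Xᵀ = f X)
    (grad : Matrix (Fin n) (Fin n) ℝ → Matrix (Fin n) (Fin n) ℝ)
    (hgrad : ∀ X H : Matrix (Fin n) (Fin n) ℝ,
      HasDerivAt (fun t : ℝ => f (X + t • H)) (frobInner (grad X) H) 0)
    (hgradCont : Continuous grad)
    (hess : Matrix (Fin n) (Fin n) ℝ → Matrix (Fin n) (Fin n) ℝ → Matrix (Fin n) (Fin n) ℝ)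
    (hhess : ∀ X H : Matrix (Fin n) (Fin n) ℝ, ∀ i j,
      HasDerivAt (fun t : ℝ => grad (X + t • H) i j) (hess X H i j) 0)
    (A : Fin m → Matrix (Fin n) (Fin n) ℝ) (hAsym : ∀ i, (A i)ᵀ = A i)
    (b : Fin m → ℝ)
    (σ Lf L L0 γ : ℝ)
    (hσ : 0 < σ) (hLf : 0 < Lf) (hL : 0 < L) (hL0 : 0 < L0) (hγ : 0 < γ)
    (hgradB : ∀ X : Matrix (Fin n) (Fin n) ℝ, frobNorm X ≤ σ ^ 2 → frobNorm (grad X) ≤ Lf)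
    (hgradLip : ∀ X Y : Matrix (Fin n) (Fin n) ℝ, frobNorm X ≤ σ ^ 2 → frobNorm Y ≤ σ ^ 2 →
      frobNorm (grad X - grad Y) ≤ L * frobNorm (X - Y))
    (hhessLip : ∀ X Y H : Matrix (Fin n) (Fin n) ℝ, frobNorm X ≤ σ ^ 2 → frobNorm Y ≤ σ ^ 2 →
      frobNorm (hess X H - hess Y H) ≤ L0 * frobNorm H * frobNorm (X - Y))
    (nA : ℝ) (hnA : ∀ X : Matrix (Fin n) (Fin n) ℝ, vecNorm (Aop A X) ≤ nA * frobNorm X)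
    (ε : ℝ) (hε : 0 ≤ ε)
    (Ub Vb : Matrix (Fin n) (Fin r) ℝ) (lamb : Fin m → ℝ)
    (hKKT : IsPenEpsKKT grad A b γ ε Ub Vb lamb)
    (hUb : frobNorm Ub ≤ σ) (hVb : frobNorm Vb ≤ σ) (hlamb : vecNorm lamb ≤ σ)
    (Uh : Matrix (Fin n) (Fin r) ℝ) (hUh : Uh = (2 : ℝ)⁻¹ • (Ub + Vb))
    :
    vecNorm (fun i => Aop A (Uh * Uhᵀ) i - b i)
      ≤ ε + nA * (ε + Lf * σ + Real.sqrt (sA A) * σ ^ 2) ^ 2 / (4 * γ ^ 2) := by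
  obtain ⟨h1, _, h3⟩ := hKKT
  set D : Matrix (Fin n) (Fin r) ℝ := Ub - Vb with hD
  set G : Matrix (Fin n) (Fin n) ℝ := grad (Ub * Vbᵀ) with hG
  set S : Matrix (Fin n) (Fin r) ℝ := ∑ i, lamb i • (A i * Vb) with hS
  -- nA is nonnegative
  have hnA0 : 0 ≤ nA := by
    set J : Matrix (Fin n) (Fin n) ℝ := Matrix.of fun _ _ => (1 : ℝ) with hJ
    have hJpos : 0 < frobNorm J := by
      rw [frobNorm]
      apply Real.sqrt_pos.mpr
      have : (∑ _i : Fin n, ∑ _j : Fin n, ((1:ℝ)) ^ 2) = (n : ℝ) * n := by simp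
      simp only [hJ, Matrix.of_apply, this]
      exact_mod_cast mul_pos (by exact_mod_cast hn) (by exact_mod_cast hn)
    nlinarith [hnA J, vecNorm_nonneg' (Aop A J)]
  -- bound on the product
  have hXb : frobNorm (Ub * Vbᵀ) ≤ σ ^ 2 := by
    calc frobNorm (Ub * Vbᵀ) ≤ frobNorm Ub * frobNorm Vbᵀ := frobNorm_mul_le' _ _
      _ = frobNorm Ub * frobNorm Vb := by rw [frobNorm_transpose']
      _ ≤ σ * σ := mul_le_mul hUb hVb (frobNorm_nonneg' _) hσ.le
      _ = σ ^ 2 := (sq σ).symm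
  have hGb : frobNorm G ≤ Lf := hgradB _ hXb
  have hGV : frobNorm (G * Vb) ≤ Lf * σ :=
    le_trans (frobNorm_mul_le' _ _) (mul_le_mul hGb hVb (frobNorm_nonneg' _) hLf.le)
  -- Cauchy-Schwarz bound on S
  have hsA0 : 0 ≤ Real.sqrt (sA A) := Real.sqrt_nonneg _
  have hSb : frobNorm S ≤ Real.sqrt (sA A) * σ ^ 2 := by
    have hCS : ∑ i, |lamb i| * frobNorm (A i) ≤ vecNorm lamb * Real.sqrt (sA A) := by
      have h2 := Finset.sum_mul_sq_le_sq_mul_sq Finset.univ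
        (fun i => |lamb i|) (fun i => frobNorm (A i))
      have hnn : 0 ≤ ∑ i, |lamb i| * frobNorm (A i) :=
        Finset.sum_nonneg fun i _ => mul_nonneg (abs_nonneg _) (frobNorm_nonneg' _)
      calc ∑ i, |lamb i| * frobNorm (A i)
          = Real.sqrt ((∑ i, |lamb i| * frobNorm (A i)) ^ 2) := (Real.sqrt_sq hnn).symm
        _ ≤ Real.sqrt ((∑ i, (lamb i) ^ 2) * sA A) := by
            apply Real.sqrt_le_sqrt
            simpa [sq_abs, sA] using h2
        _ = vecNorm lamb * Real.sqrt (sA A) := by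
            rw [Real.sqrt_mul (Finset.sum_nonneg fun i _ => sq_nonneg _)]
            rfl
    calc frobNorm S ≤ ∑ i, frobNorm (lamb i • (A i * Vb)) := frobNorm_sum_le' _
      _ = ∑ i, |lamb i| * frobNorm (A i * Vb) := by simp [frobNorm_smul']
      _ ≤ ∑ i, |lamb i| * (frobNorm (A i) * σ) := by
          refine Finset.sum_le_sum fun i _ => ?_
          exact mul_le_mul_of_nonneg_left
            (le_trans (frobNorm_mul_le' _ _)
              (mul_le_mul_of_nonneg_left hVb (frobNorm_nonneg' _))) (abs_nonneg _)
      _ = (∑ i, |lamb i| * frobNorm (A i)) * σ := by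
          rw [Finset.sum_mul]; refine Finset.sum_congr rfl fun i _ => by ring
      _ ≤ (vecNorm lamb * Real.sqrt (sA A)) * σ :=
          mul_le_mul_of_nonneg_right hCS hσ.le
      _ ≤ (σ * Real.sqrt (sA A)) * σ :=
          mul_le_mul_of_nonneg_right (mul_le_mul_of_nonneg_right hlamb hsA0) hσ.le
      _ = Real.sqrt (sA A) * σ ^ 2 := by ring
  -- bound on γ ‖D‖
  set C : ℝ := ε + Lf * σ + Real.sqrt (sA A) * σ ^ 2 with hC
  have hC0 : 0 ≤ C := by positivity
  have hγD : γ * frobNorm D ≤ C := by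
    have hdecomp : γ • D = (G * Vb + γ • D + S) - G * Vb - S := by abel
    calc γ * frobNorm D = frobNorm (γ • D) := by
          rw [frobNorm_smul', abs_of_pos hγ]
      _ = frobNorm ((G * Vb + γ • D + S) - G * Vb - S) := congrArg frobNorm hdecomp
      _ ≤ frobNorm (G * Vb + γ • D + S) + frobNorm (G * Vb) + frobNorm S := by
          simp only [frobNorm_eq']
          calc ‖(G * Vb + γ • D + S) - G * Vb - S‖
              ≤ ‖(G * Vb + γ • D + S) - G * Vb‖ + ‖S‖ := norm_sub_le _ _
            _ ≤ (‖G * Vb + γ • D + S‖ + ‖G * Vb‖) + ‖S‖ := by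
                have := norm_sub_le (G * Vb + γ • D + S) (G * Vb)
                linarith
      _ ≤ ε + Lf * σ + Real.sqrt (sA A) * σ ^ 2 := add_le_add (add_le_add h1 hGV) hSb
  have hD2 : frobNorm D ^ 2 ≤ C ^ 2 / γ ^ 2 := by
    rw [le_div_iff₀ (by positivity)]
    nlinarith [frobNorm_nonneg' D, mul_nonneg hγ.le (frobNorm_nonneg' D)]
  -- the key identity for the averaged point
  have h4 : (4 : ℝ) • (Uh * Uhᵀ)
      = (2 : ℝ) • (Ub * Vbᵀ) + (2 : ℝ) • (Vb * Ubᵀ) + D * Dᵀ := by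
    rw [hUh, hD]
    simp only [Matrix.transpose_smul, Matrix.transpose_add, Matrix.transpose_sub,
      Matrix.smul_mul, Matrix.mul_smul, Matrix.add_mul, Matrix.mul_add,
      Matrix.sub_mul, Matrix.mul_sub, smul_smul]
    module
  have hkey : ∀ i, Aop A (Uh * Uhᵀ) i - b i
      = (Aop A (Ub * Vbᵀ) i - b i) + (4:ℝ)⁻¹ * Aop A (D * Dᵀ) i := by
    intro i
    have ha : (4 : ℝ) * Aop A (Uh * Uhᵀ) i
        = 2 * Aop A (Ub * Vbᵀ) i + 2 * Aop A (Vb * Ubᵀ) i + Aop A (D * Dᵀ) i := by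
      have := congrArg (fun M => Aop A M i) h4
      simpa [Aop_add', Aop_smul'] using this
    have hb : Aop A (Vb * Ubᵀ) i = Aop A (Ub * Vbᵀ) i := by
      have ht : (Ub * Vbᵀ)ᵀ = Vb * Ubᵀ := by
        rw [Matrix.transpose_mul, Matrix.transpose_transpose]
      rw [← ht, Aop_transpose' A hAsym]
    rw [hb] at ha
    linarith
  -- assemble the final bound
  have hmain : vecNorm (fun i => Aop A (Uh * Uhᵀ) i - b i)
      ≤ ε + (4:ℝ)⁻¹ * (nA * frobNorm D ^ 2) := by
    calc vecNorm (fun i => Aop A (Uh * Uhᵀ) i - b i)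
        = vecNorm (fun i => (Aop A (Ub * Vbᵀ) i - b i) + (4:ℝ)⁻¹ * Aop A (D * Dᵀ) i) := by
          exact congrArg vecNorm (funext hkey)
      _ ≤ vecNorm (fun i => Aop A (Ub * Vbᵀ) i - b i)
          + vecNorm (fun i => (4:ℝ)⁻¹ * Aop A (D * Dᵀ) i) := vecNorm_add_le' _ _
      _ = vecNorm (fun i => Aop A (Ub * Vbᵀ) i - b i)
          + (4:ℝ)⁻¹ * vecNorm (Aop A (D * Dᵀ)) := by
          rw [vecNorm_smul']; norm_num
      _ ≤ ε + (4:ℝ)⁻¹ * (nA * frobNorm (D * Dᵀ)) := by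
          refine add_le_add h3 (mul_le_mul_of_nonneg_left (hnA _) (by norm_num))
      _ ≤ ε + (4:ℝ)⁻¹ * (nA * frobNorm D ^ 2) := by
          have : frobNorm (D * Dᵀ) ≤ frobNorm D ^ 2 := by
            calc frobNorm (D * Dᵀ) ≤ frobNorm D * frobNorm Dᵀ := frobNorm_mul_le' _ _
              _ = frobNorm D ^ 2 := by rw [frobNorm_transpose']; ring
          have h0 : (0:ℝ) ≤ (4:ℝ)⁻¹ := by norm_num
          nlinarith
  calc vecNorm (fun i => Aop A (Uh * Uhᵀ) i - b i)
      ≤ ε + (4:ℝ)⁻¹ * (nA * frobNorm D ^ 2) := hmain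
    _ ≤ ε + (4:ℝ)⁻¹ * (nA * (C ^ 2 / γ ^ 2)) := by
        have := mul_le_mul_of_nonneg_left hD2 hnA0
        nlinarith
    _ = ε + nA * C ^ 2 / (4 * γ ^ 2) := by
        field_simp
end
end

section
/- Stationarity bound for the averaged point (second half of Theorem 2.1): Let (Ū, V̄, λ̄) be an ε-KKT point of the penalized problem with ‖Ū‖_F ≤ σ, ‖V̄‖_F ≤ σ and ‖λ̄‖_2 ≤ σ, and set Û = (Ū + V̄)/2. Then ‖2∇f(ÛÛᵀ)Û + 2 Σ_{i=1}^m λ̄_i A_i Û‖_F ≤ 2ε + (2L_0 σ³ + 3Lσ)(ε + L_f σ + √(s_A) σ²)² / (2γ²). -/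
open Matrix
open scoped BigOperators

noncomputable section

/-! Adding the two KKT residuals gives the stationarity residual at `Û` up to the error
`(2∇f(ÛÛᵀ) - ∇f(UVᵀ) - ∇f(VUᵀ))Û + ½(∇f(UVᵀ) - ∇f(VUᵀ))(U - V)`. With `Y = (UVᵀ + VUᵀ)/2` and
`S = (UVᵀ - VUᵀ)/2` one has `UVᵀ = Y + S`, `VUᵀ = Y - S`, `‖S‖ ≤ σ‖U - V‖` and
`ÛÛᵀ = Y + (U - V)(U - V)ᵀ/4`; Lipschitz continuity of the Hessian bounds the second difference
`∇f(Y + S) + ∇f(Y - S) - 2∇f(Y)` by `L₀‖S‖²`, so the error is `O(‖U - V‖²)`. Finally the first KKT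
residual, read as an equation for `γ(U - V)`, gives `γ‖U - V‖ ≤ ε + L_f σ + √s_A σ²`. -/

section SecondDifference

variable {E F : Type*} [NormedAddCommGroup E] [NormedSpace ℝ E]
  [NormedAddCommGroup F] [NormedSpace ℝ F] {g : E → F} {g' : E → E → F}

theorem hasDerivAt_comp_line
    (hg : ∀ X H, HasDerivAt (fun t : ℝ => g (X + t • H)) (g' X H) 0) (X H : E) (t₀ : ℝ) :
    HasDerivAt (fun t : ℝ => g (X + t • H)) (g' (X + t₀ • H) H) t₀ := by
  have h := HasDerivAt.comp_sub_const t₀ t₀ (by rw [sub_self]; exact hg (X + t₀ • H) H)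
  convert h using 2 with t
  rw [add_assoc, ← add_smul, add_sub_cancel]

theorem add_smul_mem_segment (Y S : E) {t : ℝ} (ht : t ∈ Set.Icc (-1 : ℝ) 1) :
    Y + t • S ∈ segment ℝ (Y - S) (Y + S) :=
  ⟨(1 - t) / 2, (1 + t) / 2, by linarith [ht.2], by linarith [ht.1], by ring, by module⟩

-- Fencing argument for `φ t = g (Y + t • S) + g (Y - t • S) - 2 • g Y`: `φ 0 = 0` and
-- `‖φ' t‖ ≤ 2 K t ‖S‖`, so `‖φ t‖ ≤ K ‖S‖ t²`.
theorem norm_add_add_sub_two_smul_le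
    (hg : ∀ X H, HasDerivAt (fun t : ℝ => g (X + t • H)) (g' X H) 0) (Y S : E) {K : ℝ}
    (hlip : ∀ X ∈ segment ℝ (Y - S) (Y + S), ∀ X' ∈ segment ℝ (Y - S) (Y + S),
      ‖g' X S - g' X' S‖ ≤ K * ‖X - X'‖) :
    ‖g (Y + S) + g (Y - S) - (2 : ℝ) • g Y‖ ≤ K * ‖S‖ := by
  set φ : ℝ → F := fun t => g (Y + t • S) + g (Y - t • S) - (2 : ℝ) • g Y
  have hφ : ∀ t, HasDerivAt φ (g' (Y + t • S) S - g' (Y - t • S) S) t := by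
    intro t
    have hneg : HasDerivAt (fun t : ℝ => g (Y - t • S)) (-g' (Y - t • S) S) t := by
      simpa [Function.comp_def, neg_smul, ← sub_eq_add_neg] using
        (hasDerivAt_comp_line hg Y S (-t)).scomp t (hasDerivAt_neg t)
    rw [sub_eq_add_neg (g' _ S)]
    exact ((hasDerivAt_comp_line hg Y S t).add hneg).sub_const _
  have hB : ∀ t, HasDerivAt (fun t : ℝ => K * ‖S‖ * t ^ 2) (K * ‖S‖ * (2 * t)) t := fun t => by
    simpa using (hasDerivAt_pow 2 t).const_mul (K * ‖S‖)
  have hbound : ∀ t ∈ Set.Ico (0 : ℝ) 1,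
      ‖g' (Y + t • S) S - g' (Y - t • S) S‖ ≤ K * ‖S‖ * (2 * t) := by
    rintro t ⟨ht0, ht1⟩
    have := hlip _ (add_smul_mem_segment Y S ⟨by linarith, ht1.le⟩) _
      (by simpa [neg_smul, ← sub_eq_add_neg] using
        add_smul_mem_segment Y S (t := -t) ⟨by linarith, by linarith⟩)
    rw [add_sub_sub_cancel, ← add_smul, norm_smul, Real.norm_of_nonneg (by linarith)] at this
    linarith
  have := image_norm_le_of_norm_deriv_right_le_deriv_boundary
    (fun t _ => (hφ t).continuousAt.continuousWithinAt) (fun t _ => (hφ t).hasDerivWithinAt)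
    (by simp [φ, two_smul]) hB hbound (Set.right_mem_Icc.2 zero_le_one)
  simpa [φ] using this

theorem norm_two_smul_sub_sub_le
    (hg : ∀ X H, HasDerivAt (fun t : ℝ => g (X + t • H)) (g' X H) 0) {R L L0 : ℝ}
    (hlip : ∀ X Y, ‖X‖ ≤ R → ‖Y‖ ≤ R → ‖g X - g Y‖ ≤ L * ‖X - Y‖)
    (hlip' : ∀ X Y H, ‖X‖ ≤ R → ‖Y‖ ≤ R → ‖g' X H - g' Y H‖ ≤ L0 * ‖H‖ * ‖X - Y‖)
    {X P Q : E} (hX : ‖X‖ ≤ R) (hP : ‖P‖ ≤ R) (hQ : ‖Q‖ ≤ R) :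
    ‖(2 : ℝ) • g X - g P - g Q‖
      ≤ L0 * ‖(2 : ℝ)⁻¹ • (P - Q)‖ ^ 2 + 2 * L * ‖X - (2 : ℝ)⁻¹ • (P + Q)‖ := by
  set Y := (2 : ℝ)⁻¹ • (P + Q)
  set S := (2 : ℝ)⁻¹ • (P - Q)
  have hYS : Y + S = P := by module
  have hYS' : Y - S = Q := by module
  have hseg : segment ℝ (Y - S) (Y + S) ⊆ Metric.closedBall 0 R := by
    rw [hYS, hYS']
    exact (convex_closedBall 0 R).segment_subset (by simpa using hQ) (by simpa using hP)
  have hY : ‖Y‖ ≤ R := by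
    simpa using hseg (add_smul_mem_segment Y S (t := 0) ⟨by norm_num, by norm_num⟩)
  have hsecond := norm_add_add_sub_two_smul_le hg Y S (K := L0 * ‖S‖) fun X hX X' hX' =>
    hlip' X X' S (by simpa using hseg hX) (by simpa using hseg hX')
  rw [hYS, hYS'] at hsecond
  calc ‖(2 : ℝ) • g X - g P - g Q‖
      = ‖(2 : ℝ) • (g X - g Y) - (g P + g Q - (2 : ℝ) • g Y)‖ := by congr 1; module
    _ ≤ 2 * ‖g X - g Y‖ + ‖g P + g Q - (2 : ℝ) • g Y‖ := by
        refine (norm_sub_le _ _).trans ?_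
        rw [norm_smul, Real.norm_two]
    _ ≤ 2 * (L * ‖X - Y‖) + L0 * ‖S‖ * ‖S‖ := by
        gcongr
        exact hlip X Y hX hY
    _ = _ := by ring

end SecondDifference

theorem Matrix.hasDerivAt_of_entries {α β : Type*} [Fintype α] [Fintype β]
    {c : ℝ → Matrix α β ℝ} {c' : Matrix α β ℝ}
    {t₀ : ℝ} (h : ∀ i j, HasDerivAt (fun t => c t i j) (c' i j) t₀) : HasDerivAt c c' t₀ :=
  hasDerivAt_pi.2 fun i => hasDerivAt_pi.2 fun j => h i j

attribute [local instance] Matrix.frobeniusNormedAddCommGroup Matrix.frobeniusNormedSpace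

section Frobenius

variable {ι α β : Type*} [Fintype ι] [Fintype α] [Fintype β]

theorem frobNorm_eq_norm (X : Matrix α β ℝ) : frobNorm X = ‖X‖ := by
  rw [frobNorm, Matrix.frobenius_norm_def, Real.sqrt_eq_rpow]
  simp only [Real.norm_eq_abs, Real.rpow_two, sq_abs]

theorem norm_sum_smul_mul_le (A : ι → Matrix α α ℝ) (c : ι → ℝ) (V : Matrix α β ℝ) :
    ‖∑ i, c i • (A i * V)‖ ≤ vecNorm c * √(∑ i, ‖A i‖ ^ 2) * ‖V‖ :=
  calc ‖∑ i, c i • (A i * V)‖ ≤ ∑ i, |c i| * (‖A i‖ * ‖V‖) := by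
        refine (norm_sum_le _ _).trans (Finset.sum_le_sum fun i _ => ?_)
        rw [norm_smul, Real.norm_eq_abs]
        gcongr
        exact Matrix.frobenius_norm_mul _ _
    _ = (∑ i, |c i| * ‖A i‖) * ‖V‖ := by simp only [Finset.sum_mul, mul_assoc]
    _ ≤ √(∑ i, |c i| ^ 2) * √(∑ i, ‖A i‖ ^ 2) * ‖V‖ := by
        gcongr
        exact Real.sum_mul_le_sqrt_mul_sqrt _ _ _
    _ = vecNorm c * √(∑ i, ‖A i‖ ^ 2) * ‖V‖ := by simp only [sq_abs, vecNorm]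

theorem norm_mul_transpose_le (U V : Matrix α β ℝ) : ‖U * Vᵀ‖ ≤ ‖U‖ * ‖V‖ := by
  simpa [Matrix.frobenius_norm_transpose] using Matrix.frobenius_norm_mul U Vᵀ

theorem norm_mul_transpose_le_sq {U V : Matrix α β ℝ} {σ : ℝ} (hU : ‖U‖ ≤ σ) (hV : ‖V‖ ≤ σ) :
    ‖U * Vᵀ‖ ≤ σ ^ 2 :=
  (norm_mul_transpose_le U V).trans (by rw [sq]; gcongr; exact (norm_nonneg _).trans hU)

theorem norm_half_smul_sub_mul_transpose_le (U V : Matrix α β ℝ) :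
    ‖(2 : ℝ)⁻¹ • (U * Vᵀ - V * Uᵀ)‖ ≤ ‖U - V‖ * ‖V‖ := by
  have h : U * Vᵀ - V * Uᵀ = (U - V) * Vᵀ - V * (U - V)ᵀ := by
    simp only [Matrix.transpose_sub, Matrix.sub_mul, Matrix.mul_sub]; abel
  rw [h, norm_smul, Real.norm_of_nonneg (by norm_num)]
  have := norm_sub_le ((U - V) * Vᵀ) (V * (U - V)ᵀ)
  have := norm_mul_transpose_le (U - V) V
  have := norm_mul_transpose_le V (U - V)
  nlinarith

theorem norm_half_smul_add_mul_transpose_sub_le (U V : Matrix α β ℝ) :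
    ‖((2 : ℝ)⁻¹ • (U + V)) * ((2 : ℝ)⁻¹ • (U + V))ᵀ - (2 : ℝ)⁻¹ • (U * Vᵀ + V * Uᵀ)‖
      ≤ ‖U - V‖ ^ 2 / 4 := by
  have h : ((2 : ℝ)⁻¹ • (U + V)) * ((2 : ℝ)⁻¹ • (U + V))ᵀ - (2 : ℝ)⁻¹ • (U * Vᵀ + V * Uᵀ)
      = (4 : ℝ)⁻¹ • ((U - V) * (U - V)ᵀ) := by
    simp only [Matrix.transpose_smul, Matrix.transpose_add, Matrix.transpose_sub, Matrix.smul_mul,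
      Matrix.mul_smul, Matrix.add_mul, Matrix.mul_add, Matrix.sub_mul, Matrix.mul_sub]
    module
  rw [h, norm_smul, Real.norm_of_nonneg (by norm_num)]
  have := norm_mul_transpose_le (U - V) (U - V)
  nlinarith

theorem norm_gradient_averaging_error_le
    {grad : Matrix α α ℝ → Matrix α α ℝ} {hess : Matrix α α ℝ → Matrix α α ℝ → Matrix α α ℝ}
    (hhess : ∀ X H, HasDerivAt (fun t : ℝ => grad (X + t • H)) (hess X H) 0) {σ L L0 : ℝ}
    (hL : 0 ≤ L) (hL0 : 0 ≤ L0)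
    (hgradLip : ∀ X Y, ‖X‖ ≤ σ ^ 2 → ‖Y‖ ≤ σ ^ 2 → ‖grad X - grad Y‖ ≤ L * ‖X - Y‖)
    (hhessLip : ∀ X Y H, ‖X‖ ≤ σ ^ 2 → ‖Y‖ ≤ σ ^ 2 →
      ‖hess X H - hess Y H‖ ≤ L0 * ‖H‖ * ‖X - Y‖)
    {U V Uh : Matrix α β ℝ} (hU : ‖U‖ ≤ σ) (hV : ‖V‖ ≤ σ) (hUh : Uh = (2 : ℝ)⁻¹ • (U + V)) :
    ‖((2 : ℝ) • grad (Uh * Uhᵀ) - grad (U * Vᵀ) - grad (V * Uᵀ)) * Uh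
        + (2 : ℝ)⁻¹ • ((grad (U * Vᵀ) - grad (V * Uᵀ)) * (U - V))‖
      ≤ (L0 * σ ^ 3 + 3 / 2 * L * σ) * ‖U - V‖ ^ 2 := by
  have hσ : 0 ≤ σ := (norm_nonneg _).trans hU
  have hUh' : ‖Uh‖ ≤ σ := by
    rw [hUh, norm_smul, Real.norm_of_nonneg (by norm_num)]
    linarith [norm_add_le U V]
  have hskew : ‖(2 : ℝ)⁻¹ • (U * Vᵀ - V * Uᵀ)‖ ≤ ‖U - V‖ * σ :=
    (norm_half_smul_sub_mul_transpose_le U V).trans (by gcongr)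
  have hW : ‖(2 : ℝ) • grad (Uh * Uhᵀ) - grad (U * Vᵀ) - grad (V * Uᵀ)‖
      ≤ L0 * (‖U - V‖ * σ) ^ 2 + 2 * L * (‖U - V‖ ^ 2 / 4) := by
    refine (norm_two_smul_sub_sub_le hhess hgradLip hhessLip (norm_mul_transpose_le_sq hUh' hUh')
      (norm_mul_transpose_le_sq hU hV) (norm_mul_transpose_le_sq hV hU)).trans ?_
    rw [hUh]
    gcongr
    exact norm_half_smul_add_mul_transpose_sub_le U V
  have hG : ‖grad (U * Vᵀ) - grad (V * Uᵀ)‖ ≤ L * (2 * (‖U - V‖ * σ)) := by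
    refine (hgradLip _ _ (norm_mul_transpose_le_sq hU hV)
      (norm_mul_transpose_le_sq hV hU)).trans ?_
    rw [norm_smul, Real.norm_of_nonneg (by norm_num)] at hskew
    gcongr
    linarith
  calc _ ≤ ‖(2 : ℝ) • grad (Uh * Uhᵀ) - grad (U * Vᵀ) - grad (V * Uᵀ)‖ * ‖Uh‖
        + 2⁻¹ * (‖grad (U * Vᵀ) - grad (V * Uᵀ)‖ * ‖U - V‖) := by
        refine (norm_add_le _ _).trans (add_le_add (Matrix.frobenius_norm_mul _ _) ?_)
        rw [norm_smul, Real.norm_of_nonneg (by norm_num)]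
        gcongr
        exact Matrix.frobenius_norm_mul _ _
    _ ≤ (L0 * (‖U - V‖ * σ) ^ 2 + 2 * L * (‖U - V‖ ^ 2 / 4)) * σ
        + 2⁻¹ * (L * (2 * (‖U - V‖ * σ)) * ‖U - V‖) := by gcongr
    _ = (L0 * σ ^ 3 + 3 / 2 * L * σ) * ‖U - V‖ ^ 2 := by ring

end Frobenius

section PenalizedKKT

variable {n m r : ℕ} {grad : Matrix (Fin n) (Fin n) ℝ → Matrix (Fin n) (Fin n) ℝ}
  {A : Fin m → Matrix (Fin n) (Fin n) ℝ}

theorem sA_eq_sum_norm_sq (A : Fin m → Matrix (Fin n) (Fin n) ℝ) : sA A = ∑ i, ‖A i‖ ^ 2 := by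
  simp only [sA, frobNorm_eq_norm]

theorem IsPenEpsKKT.mul_norm_sub_le {b : Fin m → ℝ} {γ ε : ℝ} {U V : Matrix (Fin n) (Fin r) ℝ}
    {lam : Fin m → ℝ} (h : IsPenEpsKKT grad A b γ ε U V lam) (hγ : 0 ≤ γ) :
    γ * ‖U - V‖ ≤ ε + ‖grad (U * Vᵀ)‖ * ‖V‖ + vecNorm lam * √(sA A) * ‖V‖ := by
  have hres := h.1
  rw [frobNorm_eq_norm] at hres
  have hsum := norm_sum_smul_mul_le A lam V
  rw [← sA_eq_sum_norm_sq] at hsum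
  have hgV := Matrix.frobenius_norm_mul (grad (U * Vᵀ)) V
  calc γ * ‖U - V‖ = ‖γ • (U - V)‖ := by rw [norm_smul, Real.norm_of_nonneg hγ]
    _ = ‖(grad (U * Vᵀ) * V + γ • (U - V) + ∑ i, lam i • (A i * V))
        - grad (U * Vᵀ) * V - ∑ i, lam i • (A i * V)‖ := by
        congr 1
        abel
    _ ≤ _ := by
        refine (norm_sub_le _ _).trans ?_
        linarith [norm_sub_le (grad (U * Vᵀ) * V + γ • (U - V) + ∑ i, lam i • (A i * V))
          (grad (U * Vᵀ) * V)]

-- The last summand is the error made by evaluating the gradient at `ÛÛᵀ` instead of at `UVᵀ`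
-- and `VUᵀ`.
theorem two_smul_stationarity_averaged_eq (G₀ G₁ G₂ : Matrix (Fin n) (Fin n) ℝ) (γ : ℝ)
    (lam : Fin m → ℝ) (U V : Matrix (Fin n) (Fin r) ℝ) :
    (2 : ℝ) • (G₀ * ((2 : ℝ)⁻¹ • (U + V))) + (2 : ℝ) • ∑ i, lam i • (A i * ((2 : ℝ)⁻¹ • (U + V)))
      = (G₁ * V + γ • (U - V) + ∑ i, lam i • (A i * V))
        + (G₂ * U + γ • (V - U) + ∑ i, lam i • (A i * U))
        + (((2 : ℝ) • G₀ - G₁ - G₂) * ((2 : ℝ)⁻¹ • (U + V))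
          + (2 : ℝ)⁻¹ • ((G₁ - G₂) * (U - V))) := by
  have hsum : (2 : ℝ) • ∑ i, lam i • (A i * ((2 : ℝ)⁻¹ • (U + V)))
      = ∑ i, lam i • (A i * V) + ∑ i, lam i • (A i * U) := by
    rw [Finset.smul_sum, ← Finset.sum_add_distrib]
    refine Finset.sum_congr rfl fun i _ => ?_
    rw [Matrix.mul_smul, Matrix.mul_add]
    module
  rw [hsum]
  simp only [Matrix.mul_smul, Matrix.mul_add, Matrix.mul_sub, Matrix.sub_mul, Matrix.smul_mul]
  module

end PenalizedKKT

theorem stationarity_bound_averaged_point_general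
    (n m r : ℕ)
    (grad : Matrix (Fin n) (Fin n) ℝ → Matrix (Fin n) (Fin n) ℝ)
    (hess : Matrix (Fin n) (Fin n) ℝ → Matrix (Fin n) (Fin n) ℝ → Matrix (Fin n) (Fin n) ℝ)
    (hhess : ∀ X H : Matrix (Fin n) (Fin n) ℝ, ∀ i j,
      HasDerivAt (fun t : ℝ => grad (X + t • H) i j) (hess X H i j) 0)
    (A : Fin m → Matrix (Fin n) (Fin n) ℝ)
    (b : Fin m → ℝ)
    (σ Lf L L0 γ : ℝ)
    (hL : 0 < L) (hL0 : 0 < L0) (hγ : 0 < γ)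
    (hgradB : ∀ X : Matrix (Fin n) (Fin n) ℝ, frobNorm X ≤ σ ^ 2 → frobNorm (grad X) ≤ Lf)
    (hgradLip : ∀ X Y : Matrix (Fin n) (Fin n) ℝ, frobNorm X ≤ σ ^ 2 → frobNorm Y ≤ σ ^ 2 →
      frobNorm (grad X - grad Y) ≤ L * frobNorm (X - Y))
    (hhessLip : ∀ X Y H : Matrix (Fin n) (Fin n) ℝ, frobNorm X ≤ σ ^ 2 → frobNorm Y ≤ σ ^ 2 →
      frobNorm (hess X H - hess Y H) ≤ L0 * frobNorm H * frobNorm (X - Y))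
    (ε : ℝ)
    (Ub Vb : Matrix (Fin n) (Fin r) ℝ) (lamb : Fin m → ℝ)
    (hKKT : IsPenEpsKKT grad A b γ ε Ub Vb lamb)
    (hUb : frobNorm Ub ≤ σ) (hVb : frobNorm Vb ≤ σ) (hlamb : vecNorm lamb ≤ σ)
    (Uh : Matrix (Fin n) (Fin r) ℝ) (hUh : Uh = (2 : ℝ)⁻¹ • (Ub + Vb))
    :
    frobNorm ((2 : ℝ) • (grad (Uh * Uhᵀ) * Uh) + (2 : ℝ) • ∑ i, lamb i • (A i * Uh))
      ≤ 2 * ε + (2 * L0 * σ ^ 3 + 3 * L * σ) * (ε + Lf * σ + Real.sqrt (sA A) * σ ^ 2) ^ 2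
          / (2 * γ ^ 2) := by
  have hgap := hKKT.mul_norm_sub_le hγ.le
  obtain ⟨hK₁, hK₂, -⟩ := hKKT
  simp only [frobNorm_eq_norm] at hgradB hgradLip hhessLip hK₁ hK₂ hUb hVb ⊢
  have hgradP := hgradB _ (norm_mul_transpose_le_sq hUb hVb)
  set δ := ε + Lf * σ + √(sA A) * σ ^ 2
  have hgapδ : γ * ‖Ub - Vb‖ ≤ δ := by
    refine hgap.trans (add_le_add (add_le_add le_rfl ?_) ?_)
    · exact mul_le_mul hgradP hVb (norm_nonneg _) ((norm_nonneg _).trans hgradP)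
    · have hlambV : vecNorm lamb * ‖Vb‖ ≤ σ ^ 2 := by
        rw [sq]; exact mul_le_mul hlamb hVb (norm_nonneg _) ((Real.sqrt_nonneg _).trans hlamb)
      nlinarith [Real.sqrt_nonneg (sA A)]
  have hcurv := norm_gradient_averaging_error_le
    (fun X H => Matrix.hasDerivAt_of_entries (hhess X H)) hL.le hL0.le hgradLip hhessLip hUb hVb hUh
  have hres : ‖(2 : ℝ) • (grad (Uh * Uhᵀ) * Uh) + (2 : ℝ) • ∑ i, lamb i • (A i * Uh)‖
      ≤ ε + ε + (L0 * σ ^ 3 + 3 / 2 * L * σ) * ‖Ub - Vb‖ ^ 2 := by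
    rw [hUh, two_smul_stationarity_averaged_eq _ (grad (Ub * Vbᵀ)) (grad (Vb * Ubᵀ)) γ, ← hUh]
    exact (norm_add_le _ _).trans
      (add_le_add ((norm_add_le _ _).trans (add_le_add hK₁ hK₂)) hcurv)
  have hσ : 0 ≤ σ := (norm_nonneg _).trans hUb
  calc _ ≤ ε + ε + (L0 * σ ^ 3 + 3 / 2 * L * σ) * (δ / γ) ^ 2 :=
        hres.trans (by gcongr; rw [le_div_iff₀ hγ]; linarith)
    _ = 2 * ε + (2 * L0 * σ ^ 3 + 3 * L * σ) * δ ^ 2 / (2 * γ ^ 2) := by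
        field_simp
        ring

/-- second half of Theorem 2.1: stationarity bound for the averaged point. -/
theorem stationarity_bound_averaged_point
    (n m r : ℕ) (hn : 0 < n) (hm : 0 < m) (hr : 0 < r)
    (f : Matrix (Fin n) (Fin n) ℝ → ℝ)
    (hconv : ConvexOn ℝ Set.univ f)
    (hsym : ∀ X : Matrix (Fin n) (Fin n) ℝ, f Xᵀ = f X)
    (grad : Matrix (Fin n) (Fin n) ℝ → Matrix (Fin n) (Fin n) ℝ)
    (hgrad : ∀ X H : Matrix (Fin n) (Fin n) ℝ,
      HasDerivAt (fun t : ℝ => f (X + t • H)) (frobInner (grad X) H) 0)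
    (hgradCont : Continuous grad)
    (hess : Matrix (Fin n) (Fin n) ℝ → Matrix (Fin n) (Fin n) ℝ → Matrix (Fin n) (Fin n) ℝ)
    (hhess : ∀ X H : Matrix (Fin n) (Fin n) ℝ, ∀ i j,
      HasDerivAt (fun t : ℝ => grad (X + t • H) i j) (hess X H i j) 0)
    (A : Fin m → Matrix (Fin n) (Fin n) ℝ) (hAsym : ∀ i, (A i)ᵀ = A i)
    (b : Fin m → ℝ)
    (σ Lf L L0 γ : ℝ)
    (hσ : 0 < σ) (hLf : 0 < Lf) (hL : 0 < L) (hL0 : 0 < L0) (hγ : 0 < γ)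
    (hgradB : ∀ X : Matrix (Fin n) (Fin n) ℝ, frobNorm X ≤ σ ^ 2 → frobNorm (grad X) ≤ Lf)
    (hgradLip : ∀ X Y : Matrix (Fin n) (Fin n) ℝ, frobNorm X ≤ σ ^ 2 → frobNorm Y ≤ σ ^ 2 →
      frobNorm (grad X - grad Y) ≤ L * frobNorm (X - Y))
    (hhessLip : ∀ X Y H : Matrix (Fin n) (Fin n) ℝ, frobNorm X ≤ σ ^ 2 → frobNorm Y ≤ σ ^ 2 →
      frobNorm (hess X H - hess Y H) ≤ L0 * frobNorm H * frobNorm (X - Y))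
    (ε : ℝ) (hε : 0 ≤ ε)
    (Ub Vb : Matrix (Fin n) (Fin r) ℝ) (lamb : Fin m → ℝ)
    (hKKT : IsPenEpsKKT grad A b γ ε Ub Vb lamb)
    (hUb : frobNorm Ub ≤ σ) (hVb : frobNorm Vb ≤ σ) (hlamb : vecNorm lamb ≤ σ)
    (Uh : Matrix (Fin n) (Fin r) ℝ) (hUh : Uh = (2 : ℝ)⁻¹ • (Ub + Vb))
    :
    frobNorm ((2 : ℝ) • (grad (Uh * Uhᵀ) * Uh) + (2 : ℝ) • ∑ i, lamb i • (A i * Uh))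
      ≤ 2 * ε + (2 * L0 * σ ^ 3 + 3 * L * σ) * (ε + Lf * σ + Real.sqrt (sA A) * σ ^ 2) ^ 2
          / (2 * γ ^ 2) :=
  stationarity_bound_averaged_point_general n m r grad hess hhess A b σ Lf L L0 γ hL hL0 hγ hgradB
    hgradLip hhessLip ε Ub Vb lamb hKKT hUb hVb hlamb Uh hUh
end
end

section
/- Second-order symmetrization bound (inequality (part1) in the proof of Theorem 2.1): For all U, V ∈ ℝ^{n×r} with ‖U‖_F ≤ σ and ‖V‖_F ≤ σ, it holds that ‖∇f(UVᵀ) + ∇f(VUᵀ) − 2∇f((UVᵀ + VUᵀ)/2)‖_F ≤ L_0 σ² ‖U − V‖_F². -/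
open Matrix
open scoped BigOperators

noncomputable section

/-!
With `M = UVᵀ`, `N = VUᵀ`, `C = (M + N)/2` and `D = (M - N)/2`, the points `C ± tD`
(`0 ≤ t ≤ 1`) lie on the segment `[M, N]`, inside the ball where the Hessian is `L₀`-Lipschitz.
So `φ(t) = ∇f(C + tD) + ∇f(C - tD) - 2∇f(C)` vanishes at `0` and has derivative
`∇²f(C + tD)[D] - ∇²f(C - tD)[D]` of norm at most `2tL₀‖D‖²`, whence `‖φ(1)‖ ≤ L₀‖D‖²`.
Since `M - N = (U - V)Vᵀ - V(U - V)ᵀ`, also `‖D‖ ≤ σ‖U - V‖`.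
-/

open Set

section LineDerivative

variable {E F : Type*} [AddCommGroup E] [Module ℝ E] [NormedAddCommGroup F] [NormedSpace ℝ F]
  {g : E → F} {g' : E → E → F}

theorem hasDerivAt_comp_add_smul
    (hg : ∀ x v, HasDerivAt (fun t : ℝ => g (x + t • v)) (g' x v) 0) (x v : E) (t₀ : ℝ) :
    HasDerivAt (fun t : ℝ => g (x + t • v)) (g' (x + t₀ • v) v) t₀ := by
  have h : HasDerivAt (fun t : ℝ => g (x + t₀ • v + t • v)) (g' (x + t₀ • v) v) (t₀ - t₀) := by
    rw [sub_self]; exact hg _ _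
  convert h.comp_sub_const t₀ t₀ using 3 with t
  module

theorem hasDerivAt_comp_sub_smul
    (hg : ∀ x v, HasDerivAt (fun t : ℝ => g (x + t • v)) (g' x v) 0) (x v : E) (t₀ : ℝ) :
    HasDerivAt (fun t : ℝ => g (x - t • v)) (-g' (x - t₀ • v) v) t₀ := by
  convert (hasDerivAt_comp_add_smul hg x v (0 - t₀)).comp_const_sub 0 t₀ using 3 with t
  · module
  · module

end LineDerivative

theorem Convex.add_smul_mem_of_add_mem_of_sub_mem {E : Type*} [AddCommGroup E] [Module ℝ E]
    {s : Set E} (hs : Convex ℝ s) {c d : E} (h₁ : c + d ∈ s) (h₂ : c - d ∈ s) {t : ℝ}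
    (ht : |t| ≤ 1) : c + t • d ∈ s := by
  obtain ⟨ht₁, ht₂⟩ := abs_le.mp ht
  convert hs h₁ h₂ (a := (1 + t) / 2) (b := (1 - t) / 2) (by linarith) (by linarith) (by ring)
    using 1
  module

section SecondDifference

variable {E F : Type*} [NormedAddCommGroup E] [NormedSpace ℝ E]
  [NormedAddCommGroup F] [NormedSpace ℝ F] {g : E → F} {g' : E → E → F} {s : Set E} {L : ℝ}

theorem norm_symmetric_second_difference_le (hs : Convex ℝ s)
    (hg : ∀ x v, HasDerivAt (fun t : ℝ => g (x + t • v)) (g' x v) 0)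
    (hlip : ∀ x ∈ s, ∀ y ∈ s, ∀ v, ‖g' x v - g' y v‖ ≤ L * ‖v‖ * ‖x - y‖)
    {c d : E} (h₁ : c + d ∈ s) (h₂ : c - d ∈ s) :
    ‖g (c + d) + g (c - d) - (2 : ℝ) • g c‖ ≤ L * ‖d‖ ^ 2 := by
  set φ : ℝ → F := fun t => g (c + t • d) + g (c - t • d) - (2 : ℝ) • g c
  set φ' : ℝ → F := fun t => g' (c + t • d) d - g' (c - t • d) d
  have hφ : ∀ t, HasDerivAt φ (φ' t) t := fun t => by
    simpa only [φ', ← sub_eq_add_neg] using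
      ((hasDerivAt_comp_add_smul hg c d t).fun_add (hasDerivAt_comp_sub_smul hg c d t)).sub_const
        ((2 : ℝ) • g c)
  have hB : ∀ t : ℝ, HasDerivAt (fun t => L * ‖d‖ ^ 2 * t ^ 2) (2 * L * ‖d‖ ^ 2 * t) t :=
    fun t => ((hasDerivAt_pow 2 t).const_mul (L * ‖d‖ ^ 2)).congr_deriv (by norm_num; ring)
  have hmem : ∀ u : ℝ, |u| ≤ 1 → c + u • d ∈ s := fun u hu =>
    hs.add_smul_mem_of_add_mem_of_sub_mem h₁ h₂ hu
  have hφ'_le : ∀ t ∈ Ico (0 : ℝ) 1, ‖φ' t‖ ≤ 2 * L * ‖d‖ ^ 2 * t := by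
    rintro t ⟨ht₀, ht₁⟩
    have hplus : c + t • d ∈ s := hmem t (abs_le.mpr ⟨by linarith, ht₁.le⟩)
    have hminus : c - t • d ∈ s := by
      rw [sub_eq_add_neg, ← neg_smul]
      exact hmem (-t) (abs_le.mpr ⟨by linarith, by linarith⟩)
    calc ‖φ' t‖ ≤ L * ‖d‖ * ‖(c + t • d) - (c - t • d)‖ := hlip _ hplus _ hminus d
      _ = 2 * L * ‖d‖ ^ 2 * t := by
          rw [show (c + t • d) - (c - t • d) = (2 * t) • d by module, norm_smul,
            Real.norm_of_nonneg (by linarith)]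
          ring
  have key := image_norm_le_of_norm_deriv_right_le_deriv_boundary (a := 0) (b := 1) (f := φ)
    (fun t _ => (hφ t).continuousAt.continuousWithinAt) (fun t _ => (hφ t).hasDerivWithinAt)
    (by simp [φ, two_smul]) hB hφ'_le (right_mem_Icc.mpr zero_le_one)
  simpa [φ] using key

theorem norm_add_sub_two_smul_midpoint_le (hs : Convex ℝ s)
    (hg : ∀ x v, HasDerivAt (fun t : ℝ => g (x + t • v)) (g' x v) 0)
    (hlip : ∀ x ∈ s, ∀ y ∈ s, ∀ v, ‖g' x v - g' y v‖ ≤ L * ‖v‖ * ‖x - y‖)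
    {x y : E} (hx : x ∈ s) (hy : y ∈ s) :
    ‖g x + g y - (2 : ℝ) • g ((2 : ℝ)⁻¹ • (x + y))‖ ≤ L / 4 * ‖x - y‖ ^ 2 := by
  have hx' : (2 : ℝ)⁻¹ • (x + y) + (2 : ℝ)⁻¹ • (x - y) = x := by module
  have hy' : (2 : ℝ)⁻¹ • (x + y) - (2 : ℝ)⁻¹ • (x - y) = y := by module
  have h := norm_symmetric_second_difference_le hs hg hlip (hx'.symm ▸ hx) (hy'.symm ▸ hy)
  rw [hx', hy', norm_smul, mul_pow] at h
  exact h.trans_eq (by norm_num; ring)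

end SecondDifference

section Frobenius

attribute [local instance] Matrix.frobeniusNormedAddCommGroup Matrix.frobeniusNormedSpace

theorem frobNorm_eq_norm_s4 {m n : Type*} [Fintype m] [Fintype n] (X : Matrix m n ℝ) :
    frobNorm X = ‖X‖ := by
  rw [Matrix.frobenius_norm_def, frobNorm, Real.sqrt_eq_rpow]
  congr 1
  refine Finset.sum_congr rfl fun i _ => Finset.sum_congr rfl fun j _ => ?_
  rw [Real.rpow_two, Real.norm_eq_abs, sq_abs]

theorem Matrix.frobenius_hasDerivAt_iff {𝕜 m n : Type*} [NontriviallyNormedField 𝕜] [Fintype m]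
    [Fintype n] {φ : 𝕜 → Matrix m n 𝕜} {φ' : Matrix m n 𝕜} {t : 𝕜} :
    HasDerivAt φ φ' t ↔ ∀ i j, HasDerivAt (fun s => φ s i j) (φ' i j) t := by
  -- the Frobenius norm induces (definitionally) the product topology
  refine hasDerivAt_iff_tendsto_slope.trans ?_
  simp only [hasDerivAt_iff_tendsto_slope]
  exact tendsto_pi_nhds.trans (forall_congr' fun i => tendsto_pi_nhds (A := fun _ : n => 𝕜))

theorem Matrix.mul_transpose_sub_mul_transpose {R m n : Type*} [CommRing R] [Fintype n]
    (U V : Matrix m n R) : U * Vᵀ - V * Uᵀ = (U - V) * Vᵀ - V * (U - V)ᵀ := by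
  rw [Matrix.sub_mul, Matrix.transpose_sub, Matrix.mul_sub]; abel

theorem Matrix.frobenius_norm_mul_transpose_le {𝕜 m n : Type*} [RCLike 𝕜] [Fintype m]
    [Fintype n] (U V : Matrix m n 𝕜) : ‖U * Vᵀ‖ ≤ ‖U‖ * ‖V‖ :=
  (Matrix.frobenius_norm_mul _ _).trans_eq (by rw [Matrix.frobenius_norm_transpose])

theorem Matrix.frobenius_norm_mul_transpose_sub_le {𝕜 m n : Type*} [RCLike 𝕜] [Fintype m]
    [Fintype n] (U V : Matrix m n 𝕜) : ‖U * Vᵀ - V * Uᵀ‖ ≤ 2 * ‖V‖ * ‖U - V‖ := by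
  rw [Matrix.mul_transpose_sub_mul_transpose]
  calc _ ≤ ‖(U - V) * Vᵀ‖ + ‖V * (U - V)ᵀ‖ := norm_sub_le _ _
    _ ≤ ‖U - V‖ * ‖V‖ + ‖V‖ * ‖U - V‖ :=
        add_le_add (Matrix.frobenius_norm_mul_transpose_le _ _)
          (Matrix.frobenius_norm_mul_transpose_le _ _)
    _ = 2 * ‖V‖ * ‖U - V‖ := by ring

theorem second_order_symmetrization_bound_general
    (n r : ℕ)
    (grad : Matrix (Fin n) (Fin n) ℝ → Matrix (Fin n) (Fin n) ℝ)
    (hess : Matrix (Fin n) (Fin n) ℝ → Matrix (Fin n) (Fin n) ℝ → Matrix (Fin n) (Fin n) ℝ)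
    (hhess : ∀ X H : Matrix (Fin n) (Fin n) ℝ, ∀ i j,
      HasDerivAt (fun t : ℝ => grad (X + t • H) i j) (hess X H i j) 0)
    (σ L0 : ℝ) (hL0 : 0 < L0)
    (hhessLip : ∀ X Y H : Matrix (Fin n) (Fin n) ℝ, frobNorm X ≤ σ ^ 2 → frobNorm Y ≤ σ ^ 2 →
      frobNorm (hess X H - hess Y H) ≤ L0 * frobNorm H * frobNorm (X - Y))
    (U V : Matrix (Fin n) (Fin r) ℝ) (hU : frobNorm U ≤ σ) (hV : frobNorm V ≤ σ) :
    frobNorm (grad (U * Vᵀ) + grad (V * Uᵀ) - (2 : ℝ) • grad ((2 : ℝ)⁻¹ • (U * Vᵀ + V * Uᵀ)))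
      ≤ L0 * σ ^ 2 * (frobNorm (U - V)) ^ 2 := by
  simp only [frobNorm_eq_norm_s4] at hhessLip hU hV ⊢
  have hball : ∀ A B : Matrix (Fin n) (Fin r) ℝ, ‖A‖ ≤ σ → ‖B‖ ≤ σ →
      A * Bᵀ ∈ Metric.closedBall 0 (σ ^ 2) := fun A B hA hB => by
    rw [mem_closedBall_zero_iff, sq]
    exact (Matrix.frobenius_norm_mul_transpose_le A B).trans
      (mul_le_mul hA hB (norm_nonneg _) ((norm_nonneg _).trans hA))
  have hsym := norm_add_sub_two_smul_midpoint_le (convex_closedBall 0 (σ ^ 2))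
    (fun X H => Matrix.frobenius_hasDerivAt_iff.mpr (hhess X H))
    (fun X hX Y hY H => hhessLip X Y H (mem_closedBall_zero_iff.mp hX)
      (mem_closedBall_zero_iff.mp hY)) (hball U V hU hV) (hball V U hV hU)
  calc _ ≤ L0 / 4 * ‖U * Vᵀ - V * Uᵀ‖ ^ 2 := hsym
    _ ≤ L0 / 4 * (2 * σ * ‖U - V‖) ^ 2 := by
        gcongr
        exact (Matrix.frobenius_norm_mul_transpose_sub_le U V).trans (by gcongr)
    _ = L0 * σ ^ 2 * ‖U - V‖ ^ 2 := by ring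

/-- inequality (part1) in the proof of Theorem 2.1:
second-order symmetrization bound. -/
theorem second_order_symmetrization_bound
    (n r : ℕ) (hn : 0 < n) (hr : 0 < r)
    (f : Matrix (Fin n) (Fin n) ℝ → ℝ)
    (grad : Matrix (Fin n) (Fin n) ℝ → Matrix (Fin n) (Fin n) ℝ)
    (hgrad : ∀ X H : Matrix (Fin n) (Fin n) ℝ,
      HasDerivAt (fun t : ℝ => f (X + t • H)) (frobInner (grad X) H) 0)
    (hgradCont : Continuous grad)
    (hess : Matrix (Fin n) (Fin n) ℝ → Matrix (Fin n) (Fin n) ℝ → Matrix (Fin n) (Fin n) ℝ)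
    (hhess : ∀ X H : Matrix (Fin n) (Fin n) ℝ, ∀ i j,
      HasDerivAt (fun t : ℝ => grad (X + t • H) i j) (hess X H i j) 0)
    (hhessCont : ∀ H : Matrix (Fin n) (Fin n) ℝ, Continuous (fun X => hess X H))
    (σ L0 : ℝ) (hσ : 0 < σ) (hL0 : 0 < L0)
    (hhessLip : ∀ X Y H : Matrix (Fin n) (Fin n) ℝ, frobNorm X ≤ σ ^ 2 → frobNorm Y ≤ σ ^ 2 →
      frobNorm (hess X H - hess Y H) ≤ L0 * frobNorm H * frobNorm (X - Y))
    (U V : Matrix (Fin n) (Fin r) ℝ) (hU : frobNorm U ≤ σ) (hV : frobNorm V ≤ σ) :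
    frobNorm (grad (U * Vᵀ) + grad (V * Uᵀ) - (2 : ℝ) • grad ((2 : ℝ)⁻¹ • (U * Vᵀ + V * Uᵀ)))
      ≤ L0 * σ ^ 2 * (frobNorm (U - V)) ^ 2 :=
  second_order_symmetrization_bound_general n r grad hess hhess σ L0 hL0 hhessLip U V hU hV

end Frobenius
end
end

section
/- Proposition 3.2(ii): Suppose f(X) = ⟨C, X⟩ for a symmetric matrix C ∈ 𝕊^n, and suppose there exists y* ∈ ℝ^m such that the matrix C − Σ_{i=1}^m y*_i A_i is positive definite. Let λ_min > 0 and λ_max be its smallest and largest eigenvalues and κ_c = λ_max/λ_min. If ρ₀ ≥ 1 + λ_max κ_c, then for every β ∈ ℝ the level set S_β = {(U,V) ∈ ℝ^{n×r} × ℝ^{n×r} : ⟨C, UVᵀ⟩ + (ρ₀/2)‖U − V‖_F² + (ρ₀/2)‖𝒜(UVᵀ) − b‖_2² ≤ β} is either compact or empty; moreover every (U,V) ∈ S_β satisfies ‖U‖_F² ≤ (1/λ_min)(‖y*‖_2² − 2⟨y*, b⟩ + 2β) and the same bound holds for ‖V‖_F². -/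
open Matrix
open scoped BigOperators

noncomputable section

/-!
Let `M = C - ∑ᵢ y*ᵢ Aᵢ`, whose spectrum lies in `[λ_min, λ_max]`, and `t = 𝒜(UVᵀ) - b`. Then
`⟨C, UVᵀ⟩ = ⟨M, UVᵀ⟩ + ⟨y*, t⟩ + ⟨y*, b⟩`, and polarizing `⟨M, UVᵀ⟩` with the spectral bounds gives
`2⟨M, UVᵀ⟩ ≥ λ_min (‖U‖² + ‖V‖²) - λ_max ‖U - V‖²`. Since `ρ₀ ≥ λ_max` and `ρ₀ ≥ 1`, the penalty
terms absorb `-λ_max ‖U - V‖²` and, via `‖y* + t‖² ≥ 0`, also `2⟨y*, t⟩ ≥ -‖y*‖² - ‖t‖²`. Hence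
`λ_min (‖U‖² + ‖V‖²) ≤ ‖y*‖² - 2⟨y*, b⟩ + 2β` on `S_β`, which is closed, so it is compact.
-/

section Frobenius

variable {α β : Type*} [Fintype α] [Fintype β]

lemma frobInner_eq_trace (X Y : Matrix α β ℝ) : frobInner X Y = (Xᵀ * Y).trace := by
  simp only [frobInner, trace, diag, mul_apply, transpose_apply]
  exact Finset.sum_comm

lemma frobNorm_sq (X : Matrix α β ℝ) : frobNorm X ^ 2 = frobInner X X := by
  rw [frobNorm, Real.sq_sqrt (by positivity)]
  simp only [frobInner, sq]

lemma vecNorm_sq (v : α → ℝ) : vecNorm v ^ 2 = ∑ i, v i ^ 2 :=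
  Real.sq_sqrt (by positivity)

lemma vecNorm_add_sq (v w : α → ℝ) :
    vecNorm (v + w) ^ 2 = vecNorm v ^ 2 + 2 * ∑ i, v i * w i + vecNorm w ^ 2 := by
  simp only [vecNorm_sq, Pi.add_apply, add_sq, Finset.sum_add_distrib, Finset.mul_sum, mul_assoc]

lemma frobInner_transpose (X Y : Matrix α β ℝ) : frobInner Xᵀ Yᵀ = frobInner X Y := by
  simp only [frobInner, transpose_apply]
  exact Finset.sum_comm

lemma frobInner_sub_right (X Y Z : Matrix α β ℝ) :
    frobInner X (Y - Z) = frobInner X Y - frobInner X Z := by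
  simp only [frobInner, Matrix.sub_apply, mul_sub, Finset.sum_sub_distrib]

lemma frobInner_sub_left (X Y Z : Matrix α β ℝ) :
    frobInner (X - Y) Z = frobInner X Z - frobInner Y Z := by
  simp only [frobInner, Matrix.sub_apply, sub_mul, Finset.sum_sub_distrib]

lemma frobInner_smul_left (c : ℝ) (X Y : Matrix α β ℝ) :
    frobInner (c • X) Y = c * frobInner X Y := by
  simp only [frobInner, Matrix.smul_apply, smul_eq_mul, mul_assoc, Finset.mul_sum]

lemma frobInner_sum_left {ι : Type*} (s : Finset ι) (X : ι → Matrix α β ℝ) (Y : Matrix α β ℝ) :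
    frobInner (∑ k ∈ s, X k) Y = ∑ k ∈ s, frobInner (X k) Y := by
  simp only [frobInner, Matrix.sum_apply, Finset.sum_mul]
  exact (Finset.sum_congr rfl fun _ _ => Finset.sum_comm).trans Finset.sum_comm

lemma frobInner_one_mul_transpose_self [DecidableEq α] (U : Matrix α β ℝ) :
    frobInner 1 (U * Uᵀ) = frobNorm U ^ 2 := by
  rw [frobInner_eq_trace, transpose_one, one_mul, trace_mul_comm, ← frobInner_eq_trace,
    frobNorm_sq]

lemma frobInner_sub_mul_transpose_sub {M : Matrix α α ℝ} (hM : Mᵀ = M) (U V : Matrix α β ℝ) :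
    frobInner M ((U - V) * (U - V)ᵀ) =
      frobInner M (U * Uᵀ) + frobInner M (V * Vᵀ) - 2 * frobInner M (U * Vᵀ) := by
  have hcross : frobInner M (V * Uᵀ) = frobInner M (U * Vᵀ) := by
    rw [← frobInner_transpose, hM, transpose_mul, transpose_transpose]
  simp only [transpose_sub, Matrix.sub_mul, Matrix.mul_sub, frobInner_sub_right, hcross]
  ring

lemma Matrix.PosSemidef.frobInner_mul_transpose_self_nonneg {P : Matrix α α ℝ} (hP : P.PosSemidef)
    (U : Matrix α β ℝ) : 0 ≤ frobInner P (U * Uᵀ) := by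
  have hPT : Pᵀ = P := by simpa using hP.isHermitian.eq
  rw [frobInner_eq_trace, hPT, trace_mul_comm, Matrix.mul_assoc, trace_mul_comm]
  simpa using (hP.conjTranspose_mul_mul_same U).trace_nonneg

open scoped MatrixOrder in
lemma Matrix.IsHermitian.posSemidef_sub_smul_one [DecidableEq α] {M : Matrix α α ℝ}
    (hM : M.IsHermitian) {c : ℝ} (h : ∀ i, c ≤ hM.eigenvalues i) : (M - c • 1).PosSemidef := by
  rw [← Matrix.le_iff, ← Algebra.algebraMap_eq_smul_one,
    algebraMap_le_iff_le_spectrum (a := M) hM.isSelfAdjoint, hM.spectrum_real_eq_range_eigenvalues]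
  rintro _ ⟨i, rfl⟩
  exact h i

open scoped MatrixOrder in
lemma Matrix.IsHermitian.posSemidef_smul_one_sub [DecidableEq α] {M : Matrix α α ℝ}
    (hM : M.IsHermitian) {c : ℝ} (h : ∀ i, hM.eigenvalues i ≤ c) : (c • 1 - M).PosSemidef := by
  rw [← Matrix.le_iff, ← Algebra.algebraMap_eq_smul_one,
    le_algebraMap_iff_spectrum_le (a := M) hM.isSelfAdjoint, hM.spectrum_real_eq_range_eigenvalues]
  rintro _ ⟨i, rfl⟩
  exact h i

lemma Matrix.IsHermitian.mul_frobNorm_sq_le_frobInner [DecidableEq α] {M : Matrix α α ℝ}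
    (hM : M.IsHermitian) {c : ℝ} (h : ∀ i, c ≤ hM.eigenvalues i) (U : Matrix α β ℝ) :
    c * frobNorm U ^ 2 ≤ frobInner M (U * Uᵀ) := by
  have := (hM.posSemidef_sub_smul_one h).frobInner_mul_transpose_self_nonneg U
  rwa [frobInner_sub_left, frobInner_smul_left, frobInner_one_mul_transpose_self, sub_nonneg]
    at this

lemma Matrix.IsHermitian.frobInner_le_mul_frobNorm_sq [DecidableEq α] {M : Matrix α α ℝ}
    (hM : M.IsHermitian) {c : ℝ} (h : ∀ i, hM.eigenvalues i ≤ c) (U : Matrix α β ℝ) :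
    frobInner M (U * Uᵀ) ≤ c * frobNorm U ^ 2 := by
  have := (hM.posSemidef_smul_one_sub h).frobInner_mul_transpose_self_nonneg U
  rwa [frobInner_sub_left, frobInner_smul_left, frobInner_one_mul_transpose_self, sub_nonneg]
    at this

lemma Matrix.IsHermitian.frobInner_mul_transpose_lower_bound [DecidableEq α] {M : Matrix α α ℝ}
    (hM : M.IsHermitian) {lmin lmax : ℝ} (hlo : ∀ i, lmin ≤ hM.eigenvalues i)
    (hhi : ∀ i, hM.eigenvalues i ≤ lmax) (U V : Matrix α β ℝ) :
    lmin * (frobNorm U ^ 2 + frobNorm V ^ 2) - lmax * frobNorm (U - V) ^ 2 ≤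
      2 * frobInner M (U * Vᵀ) := by
  have hpol := frobInner_sub_mul_transpose_sub (by simpa using hM.eq) U V
  have hU := hM.mul_frobNorm_sq_le_frobInner hlo U
  have hV := hM.mul_frobNorm_sq_le_frobInner hlo V
  have hUV := hM.frobInner_le_mul_frobNorm_sq hhi (U - V)
  linarith

lemma sq_entry_le_frobNorm_sq (X : Matrix α β ℝ) (i : α) (j : β) : X i j ^ 2 ≤ frobNorm X ^ 2 := by
  rw [frobNorm, Real.sq_sqrt (by positivity)]
  calc X i j ^ 2 ≤ ∑ j', X i j' ^ 2 :=
        Finset.single_le_sum (f := fun j' => X i j' ^ 2) (fun _ _ => sq_nonneg _)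
          (Finset.mem_univ j)
    _ ≤ ∑ i', ∑ j', X i' j' ^ 2 :=
        Finset.single_le_sum (f := fun i' => ∑ j', X i' j' ^ 2) (fun _ _ => by positivity)
          (Finset.mem_univ i)

lemma continuous_frobNorm : Continuous (frobNorm : Matrix α β ℝ → ℝ) := by
  unfold frobNorm
  fun_prop

lemma continuous_frobInner (X : Matrix α β ℝ) : Continuous (frobInner X) := by
  unfold frobInner
  fun_prop

lemma isCompact_setOf_frobNorm_sq_le (K : ℝ) :
    IsCompact {X : Matrix α β ℝ | frobNorm X ^ 2 ≤ K} := by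
  have hbox : {X : Matrix α β ℝ | frobNorm X ^ 2 ≤ K} ⊆
      Set.univ.pi fun _ => Set.univ.pi fun _ => Set.Icc (-√K) √K :=
    fun X hX i _ j _ => abs_le.mp (Real.abs_le_sqrt ((sq_entry_le_frobNorm_sq X i j).trans hX))
  exact (isCompact_univ_pi fun _ => isCompact_univ_pi fun _ => isCompact_Icc).of_isClosed_subset
    (isClosed_le (continuous_frobNorm.pow 2) continuous_const) hbox

end Frobenius

lemma continuous_vecNorm {α : Type*} [Fintype α] : Continuous (vecNorm : (α → ℝ) → ℝ) := by
  unfold vecNorm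
  fun_prop

lemma isClosed_Sset {n m r : ℕ} {f : Matrix (Fin n) (Fin n) ℝ → ℝ} (hf : Continuous f)
    (A : Fin m → Matrix (Fin n) (Fin n) ℝ) (b : Fin m → ℝ) (ρ₀ β : ℝ) :
    IsClosed (Sset (r := r) f A b ρ₀ β) := by
  have hprod : Continuous fun p : Matrix (Fin n) (Fin r) ℝ × Matrix (Fin n) (Fin r) ℝ =>
      p.1 * p.2ᵀ := continuous_fst.matrix_mul continuous_snd.matrix_transpose
  have hres : Continuous fun p : Matrix (Fin n) (Fin r) ℝ × Matrix (Fin n) (Fin r) ℝ =>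
      fun i => Aop A (p.1 * p.2ᵀ) i - b i :=
    continuous_pi fun i => ((continuous_frobInner (A i)).comp hprod).sub continuous_const
  refine isClosed_le ?_ continuous_const
  exact ((hf.comp hprod).add (continuous_const.mul
    ((continuous_frobNorm.comp (continuous_fst.sub continuous_snd)).pow 2))).add
    (continuous_const.mul ((continuous_vecNorm.comp hres).pow 2))

lemma mul_sum_frobNorm_sq_le_of_mem_Sset {n m r : ℕ} {A : Fin m → Matrix (Fin n) (Fin n) ℝ}
    {b : Fin m → ℝ} {C : Matrix (Fin n) (Fin n) ℝ} {y : Fin m → ℝ}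
    (hM : (C - ∑ i, y i • A i).IsHermitian) {lmin lmax ρ₀ β : ℝ}
    (hlo : ∀ i, lmin ≤ hM.eigenvalues i) (hhi : ∀ i, hM.eigenvalues i ≤ lmax)
    (hρ_one : 1 ≤ ρ₀) (hρ_lmax : lmax ≤ ρ₀)
    {p : Matrix (Fin n) (Fin r) ℝ × Matrix (Fin n) (Fin r) ℝ}
    (hp : p ∈ Sset (r := r) (frobInner C) A b ρ₀ β) :
    lmin * (frobNorm p.1 ^ 2 + frobNorm p.2 ^ 2) ≤
      vecNorm y ^ 2 - 2 * ∑ i, y i * b i + 2 * β := by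
  obtain ⟨U, V⟩ := p
  set t : Fin m → ℝ := fun i => Aop A (U * Vᵀ) i - b i with ht
  have hlevel :
      frobInner C (U * Vᵀ) + ρ₀ / 2 * frobNorm (U - V) ^ 2 + ρ₀ / 2 * vecNorm t ^ 2 ≤ β := hp
  have hsplit : frobInner C (U * Vᵀ) =
      frobInner (C - ∑ i, y i • A i) (U * Vᵀ) + ∑ i, y i * t i + ∑ i, y i * b i := by
    simp only [frobInner_sub_left, frobInner_sum_left, frobInner_smul_left, ht, Aop, mul_sub,
      Finset.sum_sub_distrib]
    ring
  have hM_lower := hM.frobInner_mul_transpose_lower_bound hlo hhi U V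
  have hyt : 0 ≤ vecNorm y ^ 2 + 2 * ∑ i, y i * t i + vecNorm t ^ 2 :=
    vecNorm_add_sq y t ▸ sq_nonneg _
  have hpen_UV : lmax * frobNorm (U - V) ^ 2 ≤ ρ₀ * frobNorm (U - V) ^ 2 :=
    mul_le_mul_of_nonneg_right hρ_lmax (sq_nonneg _)
  have hpen_t : vecNorm t ^ 2 ≤ ρ₀ * vecNorm t ^ 2 :=
    le_mul_of_one_le_left (sq_nonneg _) hρ_one
  linarith

theorem level_set_compact_linear_objective_general
    (n m r : ℕ)
    (A : Fin m → Matrix (Fin n) (Fin n) ℝ)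
    (b : Fin m → ℝ)
    (C : Matrix (Fin n) (Fin n) ℝ)
    (ystar : Fin m → ℝ)
    (hPD : (C - ∑ i, ystar i • A i).PosDef)
    (lmin lmax : ℝ) (hlminpos : 0 < lmin)
    (hlmin : IsLeast (Set.range hPD.isHermitian.eigenvalues) lmin)
    (hlmax : IsGreatest (Set.range hPD.isHermitian.eigenvalues) lmax)
    (ρ₀ : ℝ) (hρ₀ : 1 + lmax * (lmax / lmin) ≤ ρ₀) :
    ∀ β : ℝ,
      (IsCompact (Sset (r := r) (fun X => frobInner C X) A b ρ₀ β) ∨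
        Sset (r := r) (fun X => frobInner C X) A b ρ₀ β = ∅) ∧
      ∀ p ∈ Sset (r := r) (fun X => frobInner C X) A b ρ₀ β,
        (frobNorm p.1) ^ 2 ≤ 1 / lmin * ((vecNorm ystar) ^ 2 - 2 * (∑ i, ystar i * b i) + 2 * β) ∧
        (frobNorm p.2) ^ 2 ≤ 1 / lmin * ((vecNorm ystar) ^ 2 - 2 * (∑ i, ystar i * b i) + 2 * β) := by
  intro β
  have hlmin_le_lmax : lmin ≤ lmax := hlmin.2 hlmax.1
  have hκ : lmax ≤ lmax * (lmax / lmin) :=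
    le_mul_of_one_le_right (hlminpos.le.trans hlmin_le_lmax) ((one_le_div hlminpos).2 hlmin_le_lmax)
  have hbound : ∀ p ∈ Sset (r := r) (fun X => frobInner C X) A b ρ₀ β,
      frobNorm p.1 ^ 2 ≤ 1 / lmin * (vecNorm ystar ^ 2 - 2 * ∑ i, ystar i * b i + 2 * β) ∧
      frobNorm p.2 ^ 2 ≤ 1 / lmin * (vecNorm ystar ^ 2 - 2 * ∑ i, ystar i * b i + 2 * β) := by
    intro p hp
    have h := mul_sum_frobNorm_sq_le_of_mem_Sset hPD.isHermitian
      (fun i => hlmin.2 ⟨i, rfl⟩) (fun i => hlmax.2 ⟨i, rfl⟩) (by linarith) (by linarith) hp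
    rw [one_div_mul_eq_div, le_div_iff₀ hlminpos, le_div_iff₀ hlminpos]
    constructor <;> nlinarith [sq_nonneg (frobNorm p.1), sq_nonneg (frobNorm p.2)]
  refine ⟨Or.inl ?_, hbound⟩
  exact ((isCompact_setOf_frobNorm_sq_le _).prod
    (isCompact_setOf_frobNorm_sq_le _)).of_isClosed_subset
      (isClosed_Sset (continuous_frobInner C) A b ρ₀ β) hbound

/-- Proposition 3.2(ii): for a linear objective with a strictly feasible dual
point, the level sets are compact or empty, with an explicit bound on the factors. -/
theorem level_set_compact_linear_objective
    (n m r : ℕ) (hn : 0 < n) (hm : 0 < m) (hr : 0 < r)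
    (A : Fin m → Matrix (Fin n) (Fin n) ℝ) (hAsym : ∀ i, (A i)ᵀ = A i)
    (b : Fin m → ℝ)
    (C : Matrix (Fin n) (Fin n) ℝ) (hC : Cᵀ = C)
    (ystar : Fin m → ℝ)
    (hPD : (C - ∑ i, ystar i • A i).PosDef)
    (lmin lmax : ℝ) (hlminpos : 0 < lmin)
    (hlmin : IsLeast (Set.range hPD.isHermitian.eigenvalues) lmin)
    (hlmax : IsGreatest (Set.range hPD.isHermitian.eigenvalues) lmax)
    (ρ₀ : ℝ) (hρ₀ : 1 + lmax * (lmax / lmin) ≤ ρ₀) :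
    ∀ β : ℝ,
      (IsCompact (Sset (r := r) (fun X => frobInner C X) A b ρ₀ β) ∨
        Sset (r := r) (fun X => frobInner C X) A b ρ₀ β = ∅) ∧
      ∀ p ∈ Sset (r := r) (fun X => frobInner C X) A b ρ₀ β,
        (frobNorm p.1) ^ 2 ≤ 1 / lmin * ((vecNorm ystar) ^ 2 - 2 * (∑ i, ystar i * b i) + 2 * β) ∧
        (frobNorm p.2) ^ 2 ≤ 1 / lmin * ((vecNorm ystar) ^ 2 - 2 * (∑ i, ystar i * b i) + 2 * β) :=
  level_set_compact_linear_objective_general n m r A b C ystar hPD lmin lmax hlminpos hlmin hlmax ρ₀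
    hρ₀
end
end
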